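/- arXiv:1502.06815 — 4 statements merged into one kernel-verified Lean document; each statement's English description precedes it below -/
import Mathlib

section
/- Let G be a group with a filtration by subgroups G[s] for s ∈ ℝ (decreasing in s, G[s] = G for s ≤ 0, each of finite index), and let φ_G(s) = ∫₀^s dt/(G : G[t]) with inverse ψ_G. Define G(y) = G[ψ_G(y)]. Suppose there exist e > 0 and Y such that G(y)^p = G(y + e) for all y ≥ Y, G ≅ ℤ_p^d, and (G(t) : G(t)^p) = p^d for all t ≥ Y. If ω_{n+1} = ω_n + e with ω_n ≥ Y, then ψ_G(ω_{n+2}) - ψ_G(ω_{n+1}) = p^d (ψ_G(ω_{n+1}) - ψ_G(ω_n)). -/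
/-- Let `G ≅ ℤ_p^d` carry an upper-numbering filtration `Gu y` of
finite-index subgroups, with Hasse–Herbrand function
`ψ_G y = ∫₀^y (G : G(t)) dt`.  Suppose (Sen) `G(y)^p = G(y + e)` for all `y ≥ Y`, and
`(G(t) : G(t)^p) = p^d` for `t ≥ Y`.  If `ω_{n+1} = ω_n + e` with `ω_n ≥ Y`, then
`ψ_G(ω_{n+2}) - ψ_G(ω_{n+1}) = p^d (ψ_G(ω_{n+1}) - ψ_G(ω_n))`. -/
theorem stmt_5 (p : ℕ) [hp : Fact p.Prime] (d : ℕ) (hd : 1 ≤ d)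
    (G : Type*) [CommGroup G]
    (iso : Nonempty (Multiplicative (Fin d → ℤ_[p]) ≃* G))
    (Gu : ℝ → Subgroup G)
    (hmono : Antitone Gu)
    (hfin : ∀ t : ℝ, (Gu t).FiniteIndex)
    (e Y : ℝ) (he : 0 < e)
    (hpow : ∀ y ≥ Y, (Gu y).map (powMonoidHom p) = Gu (y + e))
    (hquot : ∀ t ≥ Y, ((Gu t).map (powMonoidHom p)).relIndex (Gu t) = p ^ d)
    (ψ : ℝ → ℝ) (hψ : ∀ y : ℝ, ψ y = ∫ t in (0:ℝ)..y, ((Gu t).index : ℝ))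
    (ω : ℕ → ℝ) (n : ℕ)
    (hω : ∀ m, ω (m + 1) = ω m + e) (hωY : Y ≤ ω n) :
    ψ (ω (n + 2)) - ψ (ω (n + 1)) = (p : ℝ) ^ d * (ψ (ω (n + 1)) - ψ (ω n)) := by
  set f : ℝ → ℝ := fun t => ((Gu t).index : ℝ) with hf
  -- f is monotone
  have hfm : Monotone f := by
    intro a b hab
    have hle : Gu b ≤ Gu a := hmono hab
    have hdvd : (Gu a).index ∣ (Gu b).index := Subgroup.index_dvd_of_le hle
    have hpos : 0 < (Gu b).index := Nat.pos_of_ne_zero (hfin b).index_ne_zero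
    simp only [hf]
    exact_mod_cast Nat.le_of_dvd hpos hdvd
  have hint : ∀ a b : ℝ, IntervalIntegrable f MeasureTheory.volume a b := fun a b =>
    (hfm.monotoneOn _).intervalIntegrable
  -- key pointwise identity
  have hkey : ∀ t ≥ Y, f (t + e) = (p : ℝ) ^ d * f t := by
    intro t ht
    have hsub : (Gu t).map (powMonoidHom p) ≤ Gu t := by
      rintro x ⟨y, hy, rfl⟩
      exact pow_mem hy p
    have hrel := Subgroup.relIndex_mul_index hsub
    rw [hquot t ht, hpow t ht] at hrel
    simp only [hf]
    rw [← hrel]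
    push_cast
    ring
  -- rewrite differences as interval integrals
  have hdiff : ∀ a b : ℝ, ψ b - ψ a = ∫ t in a..b, f t := by
    intro a b
    rw [hψ a, hψ b]
    exact intervalIntegral.integral_interval_sub_left (hint 0 b) (hint 0 a)
  have h1 : ω (n + 1) = ω n + e := hω n
  have h2 : ω (n + 2) = ω (n + 1) + e := hω (n + 1)
  rw [hdiff, hdiff, h2, h1]
  rw [show (∫ t in (ω n + e)..(ω n + e + e), f t) = ∫ t in (ω n)..(ω n + e), f (t + e) from
    (intervalIntegral.integral_comp_add_right f e).symm]
  rw [← intervalIntegral.integral_const_mul]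
  apply intervalIntegral.integral_congr
  intro t ht
  rw [Set.uIcc_of_le (by linarith)] at ht
  exact hkey t (le_trans hωY ht.1)
end

section
/- Let K be a local field with ring of integers O_K, maximal ideal M_K, and let g ∈ x·O_K[[x]] be stable (g'(0) is neither 0 nor a root of unity). Then the map ∂₀ : Stab(g) → O_K^*, u ↦ u'(0), is an injective group homomorphism, where Stab(g) = {u ∈ x·O_K[[x]] : u'(0) ∈ O_K^*, u ∘ g = g ∘ u} under composition of power series. -/
open PowerSeries

/-- Composition `f ∘ g` of formal power series (substitution of `g`, with zero constant
term, into `f`): `(psComp f g)(x) = f(g(x))`. -/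
noncomputable def psComp {R : Type*} [CommRing R] (f g : PowerSeries R) : PowerSeries R :=
  PowerSeries.mk fun n =>
    ∑ k ∈ Finset.range (n + 1), PowerSeries.coeff (R := R) k f * PowerSeries.coeff (R := R) n (g ^ k)

lemma coeff_pow_lt_aux {R : Type*} [CommRing R] (g : PowerSeries R) (hg : coeff (R := R) 0 g = 0)
    : ∀ (k j : ℕ), j < k → coeff (R := R) j (g ^ k) = 0 := by
  intro k
  induction k with
  | zero => intro j h; omega
  | succ k ih =>
    intro j h
    rw [pow_succ, mul_comm, coeff_mul]
    apply Finset.sum_eq_zero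
    rintro ⟨a, b⟩ hab
    rw [Finset.HasAntidiagonal.mem_antidiagonal] at hab
    rcases Nat.eq_zero_or_pos a with ha | ha
    · subst ha
      have : (constantCoeff (R := R)) g = 0 := by rw [← coeff_zero_eq_constantCoeff]; exact hg
      simp [this]
    · have : b < k := by omega
      rw [ih b this, mul_zero]

lemma coeff_pow_self_aux {R : Type*} [CommRing R] (g : PowerSeries R) (hg : coeff (R := R) 0 g = 0)
    : ∀ k : ℕ, coeff (R := R) k (g ^ k) = (coeff (R := R) 1 g) ^ k := by
  intro k
  induction k with
  | zero => simp
  | succ k ih =>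
    rw [pow_succ, mul_comm, coeff_mul]
    rw [Finset.sum_eq_single (1, k)]
    · rw [ih]; ring
    · rintro ⟨a, b⟩ hab hne
      rw [Finset.HasAntidiagonal.mem_antidiagonal] at hab
      rcases Nat.eq_zero_or_pos a with ha | ha
      · subst ha
        have : (constantCoeff (R := R)) g = 0 := by rw [← coeff_zero_eq_constantCoeff]; exact hg
        simp [this]
      · have hb : b < k := by
          rcases Nat.lt_or_ge b k with h | h
          · exact h
          · exfalso; apply hne
            have : a = 1 ∧ b = k := by omega
            simp [this.1, this.2]
        rw [coeff_pow_lt_aux g hg k b hb, mul_zero]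
    · intro h
      exfalso; apply h; rw [Finset.HasAntidiagonal.mem_antidiagonal]; omega

lemma coeff_mul_low_aux {R : Type*} [CommRing R] (d h : PowerSeries R) (n : ℕ)
    (hd : ∀ j < n, coeff (R := R) j d = 0) (hh : coeff (R := R) 0 h = 0) :
    coeff (R := R) n (d * h) = 0 := by
  rw [coeff_mul]
  apply Finset.sum_eq_zero
  rintro ⟨a, b⟩ hab
  rw [Finset.HasAntidiagonal.mem_antidiagonal] at hab
  rcases Nat.lt_or_ge a n with ha | ha
  · rw [hd a ha, zero_mul]
  · have : b = 0 := by omega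
    subst this; rw [hh, mul_zero]

/-- Let `O` be the ring of integers of a finite extension `K/ℚ_p` and let
`g ∈ x·O[[x]]` be stable (`g'(0)` neither `0` nor a root of unity).  Then the multiplier
map `∂₀ : Stab(g) → O^*`, `u ↦ u'(0)`, is an injective group homomorphism on the group
`Stab(g)` of invertible power series commuting with `g` under composition. -/
theorem stmt_7 (p : ℕ) [hp : Fact p.Prime] (K : Type*) [Field K]
    [Algebra ℚ_[p] K] [FiniteDimensional ℚ_[p] K]
    [Algebra ℤ_[p] K] [IsScalarTower ℤ_[p] ℚ_[p] K]
    (O : Subalgebra ℤ_[p] K) (hO : O = integralClosure ℤ_[p] K)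
    (g : PowerSeries O) (hg0 : PowerSeries.coeff (R := O) 0 g = 0)
    (hstable : PowerSeries.coeff (R := O) 1 g ≠ 0 ∧
      ∀ n : ℕ, 1 ≤ n → (PowerSeries.coeff (R := O) 1 g) ^ n ≠ 1) :
    Set.InjOn (fun u => PowerSeries.coeff (R := O) 1 u)
      {u : PowerSeries O | PowerSeries.coeff (R := O) 0 u = 0 ∧ IsUnit (PowerSeries.coeff (R := O) 1 u) ∧
        psComp u g = psComp g u} ∧
    ∀ u ∈ {u : PowerSeries O | PowerSeries.coeff (R := O) 0 u = 0 ∧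
        IsUnit (PowerSeries.coeff (R := O) 1 u) ∧ psComp u g = psComp g u},
      ∀ v ∈ {u : PowerSeries O | PowerSeries.coeff (R := O) 0 u = 0 ∧
        IsUnit (PowerSeries.coeff (R := O) 1 u) ∧ psComp u g = psComp g u},
      PowerSeries.coeff (R := O) 1 (psComp u v) =
        PowerSeries.coeff (R := O) 1 u * PowerSeries.coeff (R := O) 1 v := by
  constructor
  · -- injectivity
    intro u hu v hv huv
    obtain ⟨hu0, _, hucomm⟩ := hu
    obtain ⟨hv0, _, hvcomm⟩ := hv
    simp only at huv
    have hg1 : PowerSeries.coeff (R := O) 1 g ≠ 0 := hstable.1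
    have key : ∀ n, PowerSeries.coeff (R := O) n u = PowerSeries.coeff (R := O) n v := by
      intro n
      induction n using Nat.strong_induction_on with
      | _ n ih =>
        match n, ih with
        | 0, _ => rw [hu0, hv0]
        | 1, _ => exact huv
        | (k+2), ih =>
          set N := k + 2 with hN
          -- difference of the left sides
          have hL : (PowerSeries.coeff (R := O) N u - PowerSeries.coeff (R := O) N v) *
              (PowerSeries.coeff (R := O) 1 g) ^ N =
              PowerSeries.coeff (R := O) N (psComp u g) - PowerSeries.coeff (R := O) N (psComp v g) := by
            simp only [psComp, coeff_mk]
            rw [← Finset.sum_sub_distrib]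
            rw [Finset.sum_eq_single N]
            · rw [coeff_pow_self_aux g hg0 N]; ring
            · intro b hb hne
              have hb' : b < N := by
                rw [Finset.mem_range] at hb; omega
              rw [ih b hb']; ring
            · intro h; exact absurd (Finset.mem_range.mpr (by omega)) h
          have hR : PowerSeries.coeff (R := O) 1 g *
              (PowerSeries.coeff (R := O) N u - PowerSeries.coeff (R := O) N v) =
              PowerSeries.coeff (R := O) N (psComp g u) - PowerSeries.coeff (R := O) N (psComp g v) := by
            simp only [psComp, coeff_mk]
            rw [← Finset.sum_sub_distrib]
            rw [Finset.sum_eq_single 1]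
            · rw [pow_one, pow_one]; ring
            · intro b hb hne
              have hpow : PowerSeries.coeff (R := O) N (u ^ b) = PowerSeries.coeff (R := O) N (v ^ b) := by
                rcases b with _ | b
                · simp
                · have hb1 : 1 ≤ b := by omega
                  have hzero : PowerSeries.coeff (R := O) N (u ^ (b+1) - v ^ (b+1)) = 0 := by
                    rw [← geom_sum₂_mul u v (b+1), mul_comm]
                    apply coeff_mul_low_aux
                    · intro j hj; rw [map_sub, ih j hj, sub_self]
                    · rw [map_sum]
                      apply Finset.sum_eq_zero
                      intro i hi
                      rw [Finset.mem_range] at hi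
                      have hcu : (constantCoeff (R := O)) u = 0 := by
                        rw [← coeff_zero_eq_constantCoeff]; exact hu0
                      have hcv : (constantCoeff (R := O)) v = 0 := by
                        rw [← coeff_zero_eq_constantCoeff]; exact hv0
                      rcases Nat.eq_zero_or_pos i with hi0 | hi0
                      · subst hi0
                        simp [coeff_zero_eq_constantCoeff, map_mul, map_pow, hcv,
                          zero_pow (by omega : b - 0 ≠ 0)]
                        omega
                      · simp [coeff_zero_eq_constantCoeff, map_mul, map_pow, hcu,
                          zero_pow (by omega : i ≠ 0)]
                  rw [map_sub, sub_eq_zero] at hzero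
                  exact hzero
              rw [hpow]; ring
            · intro h; exact absurd (Finset.mem_range.mpr (by omega)) h
          have he : (PowerSeries.coeff (R := O) N u - PowerSeries.coeff (R := O) N v) *
              (PowerSeries.coeff (R := O) 1 g) ^ N =
              PowerSeries.coeff (R := O) 1 g *
              (PowerSeries.coeff (R := O) N u - PowerSeries.coeff (R := O) N v) := by
            rw [hL, hR, hucomm, hvcomm]
          have hprod : (PowerSeries.coeff (R := O) N u - PowerSeries.coeff (R := O) N v) *
              (PowerSeries.coeff (R := O) 1 g * ((PowerSeries.coeff (R := O) 1 g) ^ (k+1) - 1)) = 0 := by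
            have : (PowerSeries.coeff (R := O) 1 g) ^ N =
                PowerSeries.coeff (R := O) 1 g * (PowerSeries.coeff (R := O) 1 g) ^ (k+1) := by
              rw [hN]; ring
            linear_combination he
          have hfac : PowerSeries.coeff (R := O) 1 g *
              ((PowerSeries.coeff (R := O) 1 g) ^ (k+1) - 1) ≠ 0 := by
            apply mul_ne_zero hg1
            intro h
            exact hstable.2 (k+1) (by omega) (by linear_combination h)
          have := mul_eq_zero.mp hprod
          rcases this with h | h
          · exact sub_eq_zero.mp h
          · exact absurd h hfac
    exact PowerSeries.ext key
  · -- homomorphism on coeff 1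
    intro u hu v hv
    simp only [psComp, coeff_mk]
    rw [Finset.sum_range_succ, Finset.sum_range_one]
    rw [hu.1, pow_one]
    ring
end

section
/- Suppose (i_n)_{n ≥ R} satisfies the closed form i_n = i_R + ((p^{d(n-R)} - 1)/(p^d - 1))(i_{R+1} - i_R) for all n ≥ R, and additionally i_{n₀ + js} = q^{(m + je)s} - 1 for j = 0, 1 (with q = p^f, d = ef, some n₀ ≥ R, integers m, s, e ≥ 1, ℓ with ℓ + n₀e = ms). Then i_n + 1 = q^{ℓ + ne} for all n ≥ R. -/
/-- Suppose `(i_n)_{n ≥ R}` satisfies the closed form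
`i_n = i_R + ((p^{d(n-R)} - 1)/(p^d - 1))(i_{R+1} - i_R)` and additionally
`i_{n₀ + js} = q^{(m + je)s} - 1` for `j = 0, 1` (with `q = p^f`, `d = ef`, `n₀ ≥ R`,
and `ℓ + n₀ e = m s`).  Then `i_n + 1 = q^{ℓ + ne}` for all `n ≥ R`. -/
theorem stmt_12 (p : ℕ) (hp : p.Prime) (f e s m R n₀ ℓ d : ℕ)
    (hf : 1 ≤ f) (he : 1 ≤ e) (hs : 1 ≤ s) (hm : 1 ≤ m)
    (hd : d = e * f) (q : ℕ) (hq : q = p ^ f)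
    (hn₀ : R ≤ n₀) (hℓ : ℓ + n₀ * e = m * s)
    (i : ℕ → ℝ)
    (hclosed : ∀ n : ℕ, R ≤ n →
      i n = i R + (((p : ℝ) ^ (d * (n - R)) - 1) / ((p : ℝ) ^ d - 1)) * (i (R + 1) - i R))
    (hval : ∀ j : ℕ, j ≤ 1 → i (n₀ + j * s) = (q : ℝ) ^ ((m + j * e) * s) - 1) :
    ∀ n : ℕ, R ≤ n → i n + 1 = (q : ℝ) ^ (ℓ + n * e) := by
  intro n hn
  have hq1 : (1:ℝ) < (q:ℝ) := by
    rw [hq]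
    exact_mod_cast Nat.one_lt_pow (by omega) hp.one_lt
  set x : ℝ := (q:ℝ) ^ e with hxdef
  have hx1 : (1:ℝ) < x := one_lt_pow₀ hq1 (by omega)
  have hx0 : (0:ℝ) < x := by linarith
  have hpd : (p:ℝ) ^ d = x := by
    rw [hxdef, hq]; push_cast; rw [hd, mul_comm e f, pow_mul]
  set K : ℝ := (i (R+1) - i R) / (x - 1) with hKdef
  have hclosed' : ∀ k : ℕ, R ≤ k → i k = i R + ((x : ℝ) ^ (k - R) - 1) * K := by
    intro k hk
    rw [hclosed k hk, pow_mul, hpd, hKdef]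
    ring
  have h0 : i n₀ = (q:ℝ) ^ (m * s) - 1 := by
    have := hval 0 (by norm_num)
    simpa using this
  have h1 : i (n₀ + s) = (q:ℝ) ^ (m * s) * x ^ s - 1 := by
    have := hval 1 (by norm_num)
    simp only [one_mul] at this
    rw [this]
    congr 1
    rw [hxdef, ← pow_mul, ← pow_add]
    congr 1
    ring
  have hxs1 : x ^ s - 1 ≠ 0 := by
    have : (1:ℝ) < x ^ s := one_lt_pow₀ hx1 (by omega)
    linarith
  -- key: K * x^(n₀ - R) = q^(m*s)
  have hK : x ^ (n₀ - R) * K = (q:ℝ) ^ (m * s) := by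
    have e0 := hclosed' n₀ hn₀
    have e1 := hclosed' (n₀ + s) (by omega)
    rw [h0] at e0
    rw [h1] at e1
    have hsplit : x ^ (n₀ + s - R) = x ^ (n₀ - R) * x ^ s := by
      rw [← pow_add]; congr 1; omega
    rw [hsplit] at e1
    have hsub : x ^ (n₀ - R) * (x ^ s - 1) * K = (q:ℝ) ^ (m * s) * (x ^ s - 1) := by
      nlinarith [e0, e1]
    have := mul_right_cancel₀ hxs1 (by linarith [hsub] : (x ^ (n₀ - R) * K) * (x ^ s - 1) = ((q:ℝ) ^ (m * s)) * (x ^ s - 1))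
    exact this
  -- i n + 1 = K * x^(n - R)
  have hin : i n + 1 = x ^ (n - R) * K := by
    have en := hclosed' n hn
    have e0 := hclosed' n₀ hn₀
    rw [h0] at e0
    nlinarith [en, e0, hK]
  rw [hin]
  -- goal: x^(n-R) * K = q^(ℓ + n*e)
  have hqms : (q:ℝ) ^ (m * s) = (q:ℝ) ^ ℓ * x ^ n₀ := by
    rw [hxdef, ← pow_mul, ← pow_add, ← hℓ]
    congr 1; ring
  have hgoal : (q:ℝ) ^ (ℓ + n * e) = (q:ℝ) ^ ℓ * x ^ n := by
    rw [hxdef, ← pow_mul, ← pow_add]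
    congr 1; ring
  have hxne : x ^ (n₀ - R) ≠ 0 := by positivity
  apply mul_right_cancel₀ hxne
  rw [hgoal]
  have h2 : x ^ (n - R) * K * x ^ (n₀ - R) = x ^ (n - R) * (x ^ (n₀ - R) * K) := by ring
  rw [h2, hK, hqms]
  rw [show x ^ (n - R) * ((q:ℝ) ^ ℓ * x ^ n₀) = (q:ℝ) ^ ℓ * (x ^ (n - R) * x ^ n₀) by ring,
    ← pow_add, show n - R + n₀ = n + (n₀ - R) by omega, pow_add]
  ring
end

section
/- Let F_q have characteristic p and let d : x·M_r[[x]] be a power series with coefficients in a 1-dimensional F_q-vector space M_r, let t ≥ 1 and c ∈ F_q nonzero. If d(x + c·x^{q^t}) ≡ d(x) (mod x^{q^t + 1}) in M_r[[x]], then the linear coefficient of d is zero. -/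
open PowerSeries

lemma aux_coeff_pow {k : Type*} [Field k] (c : k) (Q : ℕ) (hQ : 2 ≤ Q)
    (m : ℕ) (hm : m ≤ Q) :
    (PowerSeries.coeff (R := k) Q) ((PowerSeries.X + PowerSeries.C (R := k) c * PowerSeries.X ^ Q) ^ m) =
      if m = 1 then c else if m = Q then 1 else 0 := by
  rw [add_pow, map_sum]
  have hterm : ∀ i ∈ Finset.range (m + 1),
      (PowerSeries.coeff (R := k) Q)
        (PowerSeries.X ^ i * (PowerSeries.C (R := k) c * PowerSeries.X ^ Q) ^ (m - i) *
          (m.choose i : PowerSeries k)) =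
      if i + Q * (m - i) = Q then c ^ (m - i) * (m.choose i : k) else 0 := by
    intro i hi
    have : PowerSeries.X ^ i * (PowerSeries.C (R := k) c * PowerSeries.X ^ Q) ^ (m - i) *
          (m.choose i : PowerSeries k) =
        PowerSeries.C (R := k) (c ^ (m - i) * (m.choose i : k)) *
          PowerSeries.X ^ (i + Q * (m - i)) := by
      rw [mul_pow, ← pow_mul, map_mul, map_pow, pow_add, map_natCast]
      ring
    rw [this, PowerSeries.coeff_C_mul, PowerSeries.coeff_X_pow]
    simp [eq_comm, mul_comm]
  rw [Finset.sum_congr rfl hterm]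
  have hcond : ∀ i, i ≤ m → (i + Q * (m - i) = Q ↔ (i = 0 ∧ m = 1) ∨ (i = m ∧ m = Q)) := by
    intro i hi
    constructor
    · intro h
      rcases eq_or_lt_of_le hi with rfl | hlt
      · right
        refine ⟨rfl, ?_⟩
        simpa using h
      · left
        have hQle : Q ≤ Q * (m - i) := Nat.le_mul_of_pos_right Q (by omega)
        have hi0 : i = 0 := by omega
        subst hi0
        refine ⟨rfl, ?_⟩
        have h' : Q * m = Q * 1 := by simpa using h
        exact Nat.eq_of_mul_eq_mul_left (by omega) h'
    · rintro (⟨rfl, rfl⟩ | ⟨rfl, rfl⟩) <;> simp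
  have hfun : ∀ i ∈ Finset.range (m + 1),
      (if i + Q * (m - i) = Q then c ^ (m - i) * (m.choose i : k) else 0) =
      (if i = 0 ∧ m = 1 then c else 0) + (if i = m ∧ m = Q then 1 else 0) := by
    intro i hi
    have hi' : i ≤ m := by simpa [Nat.lt_succ_iff] using Finset.mem_range.mp hi
    simp only [hcond i hi']
    by_cases h1 : i = 0 ∧ m = 1
    · obtain ⟨rfl, rfl⟩ := h1
      simp [show ¬ (0 = 1 ∧ 1 = Q) by omega]
    · by_cases h2 : i = m ∧ m = Q
      · obtain ⟨rfl, h2'⟩ := h2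
        simp [h1, h2']
        exact fun h _ => absurd h (by omega)
      · simp [h1, h2]
  rw [Finset.sum_congr rfl hfun, Finset.sum_add_distrib]
  have s1 : ∑ i ∈ Finset.range (m + 1), (if i = 0 ∧ m = 1 then c else 0)
      = if m = 1 then c else 0 := by
    by_cases hm1 : m = 1
    · subst hm1; simp
    · simp [hm1]
  have s2 : ∑ i ∈ Finset.range (m + 1), (if i = m ∧ m = Q then (1:k) else 0)
      = if m = Q then 1 else 0 := by
    by_cases hmQ : m = Q
    · subst hmQ
      rw [Finset.sum_eq_single m]
      · simp
      · intro b hb hbm; simp [hbm]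
      · simp
    · simp [hmQ]
  rw [s1, s2]
  by_cases hm1 : m = 1
  · subst hm1
    simp [show (1:ℕ) ≠ Q by omega]
  · simp [hm1]

/-- Over `k = 𝔽_q` of characteristic `p` (the coefficients lying in a
1-dimensional `𝔽_q`-space identified with `k`), let `d ∈ x·k[[x]]`, `t ≥ 1` and `c ≠ 0`.
If `d(x + c x^{q^t}) ≡ d(x) (mod x^{q^t + 1})`, then the linear coefficient of `d` is
zero. -/
theorem stmt_16 (p : ℕ) (hp : p.Prime) (f : ℕ) (hf : 1 ≤ f) (q : ℕ) (hq : q = p ^ f)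
    (k : Type*) [Field k] [Fintype k] (hcard : Fintype.card k = q) (hchar : CharP k p)
    (d : PowerSeries k) (hd0 : PowerSeries.coeff (R := k) 0 d = 0)
    (t : ℕ) (ht : 1 ≤ t) (c : k) (hc : c ≠ 0)
    (hcong : ∀ j : ℕ, j ≤ q ^ t →
      PowerSeries.coeff (R := k) j
          (psComp d (PowerSeries.X + PowerSeries.C (R := k) c * PowerSeries.X ^ q ^ t)) =
        PowerSeries.coeff (R := k) j d) :
    PowerSeries.coeff (R := k) 1 d = 0 := by
  set Q := q ^ t with hQdef
  have hq2 : 2 ≤ q := by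
    rw [hq]
    calc 2 ≤ p := hp.two_le
    _ ≤ p ^ f := Nat.le_self_pow (by omega) p
  have hQ2 : 2 ≤ Q := by
    calc 2 ≤ q := hq2
    _ ≤ q ^ t := Nat.le_self_pow (by omega) q
  have h := hcong Q le_rfl
  rw [psComp, PowerSeries.coeff_mk] at h
  have hsum : ∑ m ∈ Finset.range (Q + 1),
      (PowerSeries.coeff (R := k) m) d *
        (PowerSeries.coeff (R := k) Q) ((PowerSeries.X + PowerSeries.C (R := k) c * PowerSeries.X ^ Q) ^ m)
      = PowerSeries.coeff (R := k) 1 d * c + PowerSeries.coeff (R := k) Q d := by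
    have : ∀ m ∈ Finset.range (Q + 1),
        (PowerSeries.coeff (R := k) m) d *
          (PowerSeries.coeff (R := k) Q) ((PowerSeries.X + PowerSeries.C (R := k) c * PowerSeries.X ^ Q) ^ m)
        = (if m = 1 then PowerSeries.coeff (R := k) 1 d * c else 0) +
          (if m = Q then PowerSeries.coeff (R := k) Q d else 0) := by
      intro m hm
      have hm' : m ≤ Q := by simpa [Nat.lt_succ_iff] using Finset.mem_range.mp hm
      rw [aux_coeff_pow c Q hQ2 m hm']
      by_cases hm1 : m = 1
      · subst hm1; simp [show (1:ℕ) ≠ Q by omega]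
      · by_cases hmQ : m = Q
        · subst hmQ; simp [hm1]
        · simp [hm1, hmQ]
    rw [Finset.sum_congr rfl this, Finset.sum_add_distrib]
    rw [Finset.sum_ite_eq' (Finset.range (Q + 1)) 1, Finset.sum_ite_eq' (Finset.range (Q + 1)) Q]
    simp [Finset.mem_range]
    omega
  rw [hsum] at h
  have : PowerSeries.coeff (R := k) 1 d * c = 0 := by
    have := add_eq_right.mp h
    exact this
  exact (mul_eq_zero.mp this).resolve_right hc
end
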